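/- arXiv:2108.10202 — 2 statements merged into one kernel-verified Lean document; each statement's English description precedes it below -/
import Mathlib

section
/- The Demazure operators π̃ᵢ on ℚ(x₁,…,xₙ) satisfy the braid relation π̃ᵢ π̃_{i+1} π̃ᵢ = π̃_{i+1} π̃ᵢ π̃_{i+1} for 1 ≤ i ≤ n−2. -/
open MvPolynomial

/-- The rational function field `ℚ(x₁, …, xₙ)`. -/
abbrev Kf (n : ℕ) := FractionRing (MvPolynomial (Fin n) ℚ)

/-- The variable `xᵢ` as an element of `ℚ(x₁, …, xₙ)`. -/
noncomputable def Xf (n : ℕ) (i : Fin n) : Kf n :=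
  algebraMap (MvPolynomial (Fin n) ℚ) (Kf n) (MvPolynomial.X i)

/-- The field automorphism of `ℚ(x₁, …, xₙ)` exchanging the variables `xᵢ` and `xⱼ`. -/
noncomputable def swapf (n : ℕ) (i j : Fin n) : Kf n ≃+* Kf n :=
  IsFractionRing.ringEquivOfRingEquiv
    (MvPolynomial.renameEquiv ℚ (Equiv.swap i j)).toRingEquiv

/-- The divided difference operator `Aᵢⱼ f = (f - sᵢⱼ f)/(xᵢ - xⱼ)`. -/
noncomputable def Af (n : ℕ) (i j : Fin n) (f : Kf n) : Kf n :=
  (f - swapf n i j f) / (Xf n i - Xf n j)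

/-- The Demazure operator `π̃ᵢ = Aᵢ ∘ (1 - x_{i+1})` (here with indices `i, j`). -/
noncomputable def pitf (n : ℕ) (i j : Fin n) (f : Kf n) : Kf n :=
  Af n i j ((1 - Xf n j) * f)

/-!
In terms of `g` and its transposed image `s g`, `π̃ g = ((1 - y) g - (1 - x) s g) / (x - y)`.
Permutations act by field automorphisms permuting the variables, so both sides of the braid
relation expand, via `sᵢ s_{i+1} sᵢ = s_{i+1} sᵢ s_{i+1}`, into combinations of the six images
`w f` (`w ∈ S₃`) with coefficients rational in `xᵢ, x_{i+1}, x_{i+2}`. The two expansions agree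
as an identity in any field (both equal `∑_{w ∈ S₃} w (g / Δ)`, where
`g = (1 - x_{i+1}) (1 - x_{i+2})² f` and `Δ` is the Vandermonde product of the three variables).
-/

/-- `π̃ g` for the variables `x, y`, where `sg` is the image of `g` under their transposition. -/
def demazureFormula {K : Type*} [Field K] (x y g sg : K) : K :=
  ((1 - y) * g - (1 - x) * sg) / (x - y)

lemma map_demazureFormula {K L F : Type*} [Field K] [Field L] [FunLike F K L]
    [RingHomClass F K L] (φ : F) (x y g sg : K) :
    φ (demazureFormula x y g sg) = demazureFormula (φ x) (φ y) (φ g) (φ sg) := by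
  simp [demazureFormula]

theorem demazureFormula_braid {K : Type*} [Field K] {x y z : K} (hxy : x ≠ y) (hyz : y ≠ z)
    (hxz : x ≠ z) (f f₁ f₂ f₁₂ f₂₁ f₁₂₁ : K) :
    demazureFormula x y
        (demazureFormula y z (demazureFormula x y f f₁) (demazureFormula x z f₂ f₂₁))
        (demazureFormula x z (demazureFormula y x f₁ f) (demazureFormula y z f₁₂ f₁₂₁)) =
      demazureFormula y z
        (demazureFormula x y (demazureFormula y z f f₂) (demazureFormula x z f₁ f₁₂))
        (demazureFormula x z (demazureFormula z y f₂ f) (demazureFormula x y f₂₁ f₁₂₁)) := by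
  have := sub_ne_zero.2 hxy
  have := sub_ne_zero.2 hyz
  have := sub_ne_zero.2 hxz
  simp only [demazureFormula]
  field_simp
  ring

lemma swap_braid {α : Type*} [DecidableEq α] {a b c : α} (hab : a ≠ b) (hbc : b ≠ c)
    (hac : a ≠ c) :
    Equiv.swap a b * (Equiv.swap b c * Equiv.swap a b) =
      Equiv.swap b c * (Equiv.swap a b * Equiv.swap b c) := by
  rw [← mul_assoc, ← mul_assoc, Equiv.swap_mul_swap_mul_swap hab hac, Equiv.swap_comm a b,
    Equiv.swap_comm b c, Equiv.swap_mul_swap_mul_swap hbc.symm hac.symm, Equiv.swap_comm]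

noncomputable def permf (n : ℕ) (σ : Equiv.Perm (Fin n)) : Kf n ≃+* Kf n :=
  IsFractionRing.ringEquivOfRingEquiv (renameEquiv ℚ σ).toRingEquiv

lemma permf_Xf (n : ℕ) (σ : Equiv.Perm (Fin n)) (k : Fin n) :
    permf n σ (Xf n k) = Xf n (σ k) := by
  simp [permf, Xf]

lemma permf_mul (n : ℕ) (σ τ : Equiv.Perm (Fin n)) :
    permf n (σ * τ) = (permf n τ).trans (permf n σ) := by
  rw [permf, permf, permf, ← IsFractionRing.ringEquivOfRingEquiv_comp, Equiv.Perm.mul_def,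
    ← renameEquiv_trans]
  rfl

lemma permf_permf (n : ℕ) (σ τ : Equiv.Perm (Fin n)) (f : Kf n) :
    permf n σ (permf n τ f) = permf n (σ * τ) f := by
  rw [permf_mul, RingEquiv.trans_apply]

lemma permf_one (n : ℕ) : permf n 1 = RingEquiv.refl (Kf n) := by
  rw [permf, Equiv.Perm.one_def, renameEquiv_refl]
  exact IsFractionRing.ringEquivOfRingEquiv_refl

lemma Xf_injective (n : ℕ) : Function.Injective (Xf n) :=
  (IsFractionRing.injective _ _).comp X_injective

lemma pitf_eq_demazureFormula (n : ℕ) (i j : Fin n) (f : Kf n) :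
    pitf n i j f = demazureFormula (Xf n i) (Xf n j) f (permf n (Equiv.swap i j) f) := by
  simp only [pitf, Af, swapf, map_mul, map_sub, map_one]
  rw [← permf, permf_Xf, Equiv.swap_apply_right]
  rfl

/-- The Demazure operators `π̃ᵢ` on `ℚ(x₁,…,xₙ)` satisfy the braid relation
`π̃ᵢ π̃_{i+1} π̃ᵢ = π̃_{i+1} π̃ᵢ π̃_{i+1}`. -/
theorem pitf_braid (n : ℕ) (i : ℕ) (h : i + 2 < n) (f : Kf n) :
    pitf n ⟨i, by omega⟩ ⟨i + 1, by omega⟩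
        (pitf n ⟨i + 1, by omega⟩ ⟨i + 2, h⟩
          (pitf n ⟨i, by omega⟩ ⟨i + 1, by omega⟩ f))
      = pitf n ⟨i + 1, by omega⟩ ⟨i + 2, h⟩
          (pitf n ⟨i, by omega⟩ ⟨i + 1, by omega⟩
            (pitf n ⟨i + 1, by omega⟩ ⟨i + 2, h⟩ f)) := by
  set a : Fin n := ⟨i, by omega⟩
  set b : Fin n := ⟨i + 1, by omega⟩
  set c : Fin n := ⟨i + 2, h⟩
  have hab : a ≠ b := by simp [a, b, Fin.ext_iff]
  have hbc : b ≠ c := by simp [b, c, Fin.ext_iff]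
  have hac : a ≠ c := by simp [a, c, Fin.ext_iff]
  simp only [pitf_eq_demazureFormula, map_demazureFormula, permf_permf, permf_Xf,
    Equiv.swap_apply_left, Equiv.swap_apply_right, Equiv.swap_apply_of_ne_of_ne hab hac,
    Equiv.swap_apply_of_ne_of_ne hac.symm hbc.symm, Equiv.swap_mul_self, permf_one,
    RingEquiv.refl_apply, swap_braid hab hbc hac]
  exact demazureFormula_braid ((Xf_injective n).ne hab) ((Xf_injective n).ne hbc)
    ((Xf_injective n).ne hac) _ _ _ _ _ _
end

section
/- For each n ≥ 1, the signed sum of Grothendieck polynomials over S_n satisfies ∑_{w ∈ S_n} (−1)^{ℓ(w)} 𝔊_w = ∏_{i=1}^{n−1} (1 − xᵢ)^{n−i}. -/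
open MvPolynomial

/-- The Coxeter length of a permutation of `Fin n`: the number of inversions. -/
def lenf (n : ℕ) (w : Equiv.Perm (Fin n)) : ℕ :=
  (Finset.univ.filter (fun p : Fin n × Fin n => p.1 < p.2 ∧ w p.2 < w p.1)).card

/-!
Write `S = ∑_w (-1)^ℓ(w) 𝔊_w` and `N(f) = (1 - x_b) f - (1 - x_a) s_{ab} f` for adjacent
`b = a + 1`, so that `π̃ f = N(f) / (x_a - x_b)`. As `π̃ f` is `s_{ab}`-symmetric, `N(π̃ f) = N(f)`,
and pairing `w` with `w s_{ab}` in `S` gives `N(S) = 0`, i.e. `(1 - x_b) S = (1 - x_a) s_{ab} S`.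

Descending induction from `w₀` shows that every `𝔊_w` is a polynomial of degree at most `|δ|`,
`δ = (n-1, …, 1, 0)`, and of smaller degree unless `w = w₀`. Hence `S` is a polynomial of degree
`≤ |δ|` whose coefficient of `x^δ` is `(-1)^ℓ(w₀) = (-1)^|δ|`. The functional equations give
`(1 - x_a)^(n-1-a) ∣ S` by descending induction on `a`; these powers of distinct primes are
coprime, so `P = ∏ (1 - x_a)^(n-1-a)` divides `S`. Since `P` has degree `|δ|` and the same
coefficient of `x^δ`, `S = P`.
-/

open Equiv

namespace MvPolynomial

variable {σ R : Type*} [CommRing R]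

theorem X_sub_X_dvd_sub_rename_swap [DecidableEq σ] (i j : σ) (f : MvPolynomial σ R) :
    X i - X j ∣ f - rename (swap i j) f := by
  let I := Ideal.span {(X i - X j : MvPolynomial σ R)}
  have hij : Ideal.Quotient.mk I (X i) = Ideal.Quotient.mk I (X j) :=
    Ideal.Quotient.eq.2 (Ideal.mem_span_singleton_self _)
  have hmk : (Ideal.Quotient.mkₐ R I).comp (rename (swap i j)) = Ideal.Quotient.mkₐ R I := by
    ext k
    simp only [AlgHom.comp_apply, rename_X, Ideal.Quotient.mkₐ_eq_mk, swap_apply_def]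
    split_ifs <;> simp_all
  rw [← Ideal.mem_span_singleton, ← Ideal.Quotient.eq]
  exact (AlgHom.congr_fun hmk f).symm

theorem rename_swap_rename_swap [DecidableEq σ] (i j : σ) (f : MvPolynomial σ R) :
    rename (swap i j) (rename (swap i j) f) = f := by
  rw [rename_rename, ← coe_trans, swap_swap, coe_refl, rename_id_apply]

theorem rename_prod_X_pow [Fintype σ] (τ : Perm σ) (e : σ → ℕ)
    (he : ∀ k, e (τ k) = e k) :
    rename τ (∏ k, X k ^ e k : MvPolynomial σ R) = ∏ k, X k ^ e k := by
  simp only [map_prod, map_pow, rename_X]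
  exact Fintype.prod_equiv τ _ _ fun k => by rw [he]

theorem totalDegree_one_sub_X [Nontrivial R] (i : σ) :
    (1 - X i : MvPolynomial σ R).totalDegree = 1 := by
  rw [sub_eq_neg_add, totalDegree_add_eq_left_of_totalDegree_lt] <;> simp

theorem irreducible_one_sub_X [IsDomain R] (i : σ) : Irreducible (1 - X i : MvPolynomial σ R) :=
  irreducible_of_totalDegree_eq_one (totalDegree_one_sub_X i) fun x hx =>
    isUnit_of_dvd_one (by simpa using hx 0)

theorem isRelPrime_one_sub_X [IsDomain R] {i j : σ} (hij : i ≠ j) :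
    IsRelPrime (1 - X i : MvPolynomial σ R) (1 - X j) := by
  classical
  refine (irreducible_one_sub_X i).isRelPrime_iff_not_dvd.2 fun h => ?_
  have := map_dvd (eval fun k => if k = i then (1 : R) else 0) h
  simp [hij.symm] at this

/-- This coefficient is the leading coefficient of the product in degree-lexicographic order. -/
theorem coeff_prod_one_sub_X_pow [IsDomain R] (s : Finset σ) (e : σ → ℕ) :
    coeff (∑ k ∈ s, Finsupp.single k (e k)) (∏ k ∈ s, (1 - X k : MvPolynomial σ R) ^ e k)
      = (-1) ^ ∑ k ∈ s, e k := by
  open MonomialOrder in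
  obtain ⟨_, _⟩ := exists_wellFoundedGT σ
  have hlin (k : σ) : (1 - X k : MvPolynomial σ R) = -(X k - C 1) := by simp
  have hlc (k : σ) : degLex.leadingCoeff (1 - X k : MvPolynomial σ R) = -1 := by
    rw [hlin, leadingCoeff_neg, (monic_X_sub_C _ _ _).leadingCoeff_eq_one]
  have hdeg : degLex.degree (∏ k ∈ s, (1 - X k : MvPolynomial σ R) ^ e k)
      = ∑ k ∈ s, Finsupp.single k (e k) := by
    rw [degree_prod fun k _ => pow_ne_zero _ fun h => by simpa [h] using hlc k]
    refine Finset.sum_congr rfl fun k _ => ?_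
    rw [degree_pow, hlin, degree_neg, degree_X_sub_C, Finsupp.smul_single_one]
  have hreg (k : σ) :
      IsRegular (degLex.leadingCoeff ((1 - X k : MvPolynomial σ R) ^ e k)) := by
    rw [leadingCoeff_pow, hlc]
    exact (IsRegular.of_ne_zero (neg_ne_zero.2 one_ne_zero)).pow _
  rw [← hdeg]
  change degLex.leadingCoeff _ = _
  simp only [leadingCoeff_prod_of_regular fun k _ => hreg k, leadingCoeff_pow, hlc,
    Finset.prod_pow_eq_pow_sum]

theorem eq_of_dvd_of_totalDegree_le [IsDomain R] {p s : MvPolynomial σ R} {d : σ →₀ ℕ}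
    (hdvd : p ∣ s) (hs : s.totalDegree ≤ d.degree) (hp : coeff d p ≠ 0)
    (hsp : coeff d s = coeff d p) : s = p := by
  obtain ⟨u, rfl⟩ := hdvd
  have hu : u ≠ 0 := by rintro rfl; simp_all
  have hpd : d.degree ≤ p.totalDegree := le_totalDegree (mem_support_iff.2 hp)
  rw [totalDegree_mul_of_isDomain (by rintro rfl; simp at hp) hu] at hs
  obtain ⟨c, rfl⟩ : ∃ c, u = C c := ⟨_, totalDegree_eq_zero_iff_eq_C.1 (by omega)⟩
  rw [mul_comm, coeff_C_mul, mul_left_eq_self₀] at hsp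
  rw [hsp.resolve_right hp, C_1, mul_one]

theorem one_sub_X_pow_succ_dvd {K : Type*} [Field K] [DecidableEq σ] {i j : σ} (hij : i ≠ j)
    {f : MvPolynomial σ K} (hf : (1 - X j) * f = (1 - X i) * rename (swap i j) f) {d : ℕ}
    (hd : (1 - X j) ^ d ∣ f) : (1 - X i) ^ (d + 1) ∣ f := by
  have h : (1 - X j) ^ (d + 1) ∣ (1 - X i) * rename (swap i j) f := by
    rw [← hf, pow_succ']
    exact mul_dvd_mul_left _ hd
  have := map_dvd (rename (swap i j))
    ((isRelPrime_one_sub_X hij.symm).pow_left.dvd_of_dvd_mul_left h)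
  rwa [rename_swap_rename_swap, map_pow, map_sub, map_one, rename_X, swap_apply_right] at this

theorem prod_one_sub_X_pow_dvd {K : Type*} [Field K] {n : ℕ} {f : MvPolynomial (Fin n) K}
    (hf : ∀ a b : Fin n, (a : ℕ) + 1 = b → (1 - X b) * f = (1 - X a) * rename (swap a b) f) :
    ∏ k : Fin n, (1 - X k) ^ (n - 1 - k) ∣ f := by
  have hpow (d : ℕ) : ∀ k : Fin n, (k : ℕ) + d = n - 1 → (1 - X k) ^ d ∣ f := by
    induction d with
    | zero => simp
    | succ d ih =>
      intro k hk
      have hb : (k : ℕ) + 1 < n := by omega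
      exact one_sub_X_pow_succ_dvd (j := ⟨k + 1, hb⟩) (Fin.ne_of_val_ne (by simp))
        (hf k _ rfl) (ih _ (show (k : ℕ) + 1 + d = n - 1 by omega))
  exact Fintype.prod_dvd_of_isRelPrime (fun k l hkl => (isRelPrime_one_sub_X hkl).pow)
    fun k => hpow _ k (by omega)

end MvPolynomial

variable {n : ℕ}

/-- Relabelling pairs by the adjacent transposition `(a b)` maps the inversions of `w` onto
those of `w * (a b)` other than the new inversion `(a, b)`. -/
theorem lenf_mul_swap_of_lt {w : Perm (Fin n)} {a b : Fin n} (hab : (a : ℕ) + 1 = b)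
    (h : w a < w b) : lenf n (w * swap a b) = lenf n w + 1 := by
  let e : Fin n × Fin n ≃ Fin n × Fin n := (swap a b).prodCongr (swap a b)
  have hba : ¬ b < a := not_lt.2 (Fin.le_def.2 (by omega))
  have hinv : (Finset.univ.filter fun p : Fin n × Fin n =>
        p.1 < p.2 ∧ (w * swap a b) p.2 < (w * swap a b) p.1)
      = insert (a, b) ((Finset.univ.filter fun p : Fin n × Fin n =>
        p.1 < p.2 ∧ w p.2 < w p.1).map e.toEmbedding) := by
    ext ⟨p, q⟩
    simp only [Finset.mem_filter, Finset.mem_univ, true_and, Finset.mem_insert,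
      Finset.mem_map_equiv]
    simp only [e, prodCongr_symm, symm_swap, prodCongr_apply, Prod.map_apply, Prod.mk.injEq,
      Perm.mul_apply, swap_apply_def]
    rw [Fin.lt_def] at h
    split_ifs <;> subst_vars <;>
      simp only [Fin.ext_iff, Fin.lt_def, true_and, true_or, iff_true] at * <;> omega
  rw [lenf, hinv, Finset.card_insert_of_notMem (by simp [e, hba]), Finset.card_map, lenf]

theorem lenf_le_lenf_revPerm (w : Perm (Fin n)) : lenf n w ≤ lenf n Fin.revPerm :=
  Finset.card_le_card fun p hp => by
    simp only [Finset.mem_filter, Finset.mem_univ, true_and, Fin.revPerm_apply,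
      Fin.rev_lt_rev] at hp ⊢
    exact ⟨hp.1, hp.1⟩

theorem lenf_revPerm : lenf n Fin.revPerm = ∑ k : Fin n, (n - 1 - k) := by
  rw [lenf, Finset.card_eq_sum_card_fiberwise (f := Prod.fst) (t := Finset.univ) (by simp)]
  refine Finset.sum_congr rfl fun k _ => ?_
  rw [← Fin.card_Ioi]
  refine Finset.card_nbij' Prod.snd (fun l => (k, l)) ?_ ?_ ?_ ?_ <;> intro x <;> aesop

theorem exists_adjacent_lt_of_ne_revPerm {w : Perm (Fin n)} (hw : w ≠ Fin.revPerm) :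
    ∃ a b : Fin n, (a : ℕ) + 1 = b ∧ w a < w b := by
  by_contra! h
  have hanti : StrictAnti w := by
    cases n with
    | zero => exact fun a => a.elim0
    | succ m =>
      refine Fin.strictAnti_iff_succ_lt.2 fun i => ?_
      exact (h _ _ (Fin.val_succ i).symm).lt_of_ne (w.injective.ne Fin.castSucc_lt_succ.ne')
  refine hw (Equiv.ext fun x => ?_)
  simpa using (hanti.comp Fin.rev_strictAnti).apply_eq (x := x.rev)

noncomputable def staircase (n : ℕ) : Fin n →₀ ℕ :=
  ∑ k : Fin n, Finsupp.single k (n - 1 - k)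

theorem monomial_staircase :
    monomial (staircase n) (1 : ℚ) = ∏ k : Fin n, X k ^ (n - 1 - k) := by
  simp [staircase, monomial_sum_one, X_pow_eq_monomial]

theorem degree_staircase : (staircase n).degree = lenf n Fin.revPerm := by
  simp only [staircase, map_sum, Finsupp.degree_single, lenf_revPerm]

theorem coeff_staircase_prod_one_sub_X_pow :
    coeff (staircase n) (∏ k : Fin n, (1 - X k) ^ (n - 1 - k))
      = (-1 : ℚ) ^ (staircase n).degree := by
  rw [degree_staircase, lenf_revPerm]
  exact coeff_prod_one_sub_X_pow _ _

theorem swapf_algebraMap (i j : Fin n) (f : MvPolynomial (Fin n) ℚ) :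
    swapf n i j (algebraMap _ _ f) = algebraMap _ _ (rename (swap i j) f) :=
  IsFractionRing.ringEquivOfRingEquiv_algebraMap _ f

theorem swapf_Xf (i j k : Fin n) : swapf n i j (Xf n k) = Xf n (swap i j k) := by
  rw [Xf, swapf_algebraMap, rename_X, Xf]

theorem swapf_swapf (i j : Fin n) (f : Kf n) : swapf n i j (swapf n i j f) = f := by
  have : (swapf n i j).toRingHom.comp (swapf n i j).toRingHom = RingHom.id _ :=
    IsLocalization.ringHom_ext (nonZeroDivisors (MvPolynomial (Fin n) ℚ)) <|
      RingHom.ext fun g => by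
      simp only [RingHom.comp_apply, RingEquiv.toRingHom_eq_coe, RingEquiv.coe_toRingHom,
        swapf_algebraMap, rename_swap_rename_swap, RingHom.id_apply]
  exact RingHom.congr_fun this f

theorem Xf_sub_Xf_ne_zero {i j : Fin n} (hij : i ≠ j) : Xf n i - Xf n j ≠ 0 := by
  rw [Xf, Xf, ← map_sub, ne_eq, IsFractionRing.to_map_eq_zero_iff, sub_eq_zero]
  exact X_injective.ne hij

noncomputable def pitfNum (n : ℕ) (i j : Fin n) (f : Kf n) : Kf n :=
  (1 - Xf n j) * f - (1 - Xf n i) * swapf n i j f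

theorem pitf_eq_div (i j : Fin n) (f : Kf n) :
    pitf n i j f = pitfNum n i j f / (Xf n i - Xf n j) := by
  rw [pitf, Af, map_mul, map_sub, map_one, swapf_Xf, swap_apply_right, pitfNum]

theorem swapf_pitfNum (i j : Fin n) (f : Kf n) :
    swapf n i j (pitfNum n i j f) = -pitfNum n i j f := by
  simp only [pitfNum, map_sub, map_mul, map_one, swapf_Xf, swap_apply_left, swap_apply_right,
    swapf_swapf]
  ring

theorem swapf_pitf (i j : Fin n) (f : Kf n) : swapf n i j (pitf n i j f) = pitf n i j f := by
  rw [pitf_eq_div, map_div₀, swapf_pitfNum, map_sub, swapf_Xf, swapf_Xf, swap_apply_left,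
    swap_apply_right, ← neg_sub (Xf n i), neg_div_neg_eq]

theorem pitfNum_pitf {i j : Fin n} (hij : i ≠ j) (f : Kf n) :
    pitfNum n i j (pitf n i j f) = pitfNum n i j f := by
  rw [pitfNum, swapf_pitf, pitf_eq_div]
  field_simp [Xf_sub_Xf_ne_zero hij]
  ring

theorem pitfNum_algebraMap (i j : Fin n) (f : MvPolynomial (Fin n) ℚ) :
    pitfNum n i j (algebraMap _ _ f)
      = algebraMap _ _ ((1 - X j) * f - (1 - X i) * rename (swap i j) f) := by
  simp only [pitfNum, swapf_algebraMap, map_sub, map_mul, map_one, Xf]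

theorem pitf_algebraMap_of_mul_eq {i j : Fin n} (hij : i ≠ j) {f q : MvPolynomial (Fin n) ℚ}
    (hq : (1 - X j) * f - (1 - X i) * rename (swap i j) f = (X i - X j) * q) :
    pitf n i j (algebraMap _ _ f) = algebraMap _ _ q := by
  rw [pitf_eq_div, pitfNum_algebraMap, hq, map_mul, map_sub, ← Xf, ← Xf,
    mul_div_cancel_left₀ _ (Xf_sub_Xf_ne_zero hij)]

theorem exists_pitf_algebraMap_totalDegree_le {i j : Fin n} (hij : i ≠ j)
    (f : MvPolynomial (Fin n) ℚ) :
    ∃ q : MvPolynomial (Fin n) ℚ,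
      pitf n i j (algebraMap _ _ f) = algebraMap _ _ q ∧ q.totalDegree ≤ f.totalDegree := by
  obtain ⟨q, hq⟩ := X_sub_X_dvd_sub_rename_swap i j ((1 - X j) * f)
  have hdeg := congrArg totalDegree hq
  rw [map_mul, map_sub, map_one, rename_X, swap_apply_right] at hq
  refine ⟨q, pitf_algebraMap_of_mul_eq hij hq, ?_⟩
  rcases eq_or_ne q 0 with rfl | hq0
  · simp
  have hX : 1 ≤ (X i - X j : MvPolynomial (Fin n) ℚ).totalDegree := by
    have := le_totalDegree (p := (X i - X j : MvPolynomial (Fin n) ℚ)) (s := Finsupp.single i 1)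
    simpa [coeff_X, Finsupp.single_left_inj, hij.symm] using this
  have hle : ((1 - X j) * f - rename (swap i j) ((1 - X j) * f)).totalDegree
      ≤ 1 + f.totalDegree :=
    (totalDegree_sub _ _).trans <| max_le_iff.2 ⟨le_rfl, totalDegree_rename_le _ _⟩ |>.trans <|
      (totalDegree_mul _ _).trans (by rw [totalDegree_one_sub_X])
  rw [hdeg, totalDegree_mul_of_isDomain (sub_ne_zero.2 (X_injective.ne hij)) hq0] at hle
  omega

/-- The exponents of `x_a` and `x_b` in `x^δ` differ by one, so `x^δ = x_a * q` with `q`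
symmetric in `x_a, x_b`, and then `π̃ (x_a * q) = q`. -/
theorem exists_pitf_staircase {a b : Fin n} (hab : (a : ℕ) + 1 = b) :
    ∃ q : MvPolynomial (Fin n) ℚ,
      pitf n a b (∏ k : Fin n, Xf n k ^ (n - 1 - k)) = algebraMap _ _ q
        ∧ q.totalDegree < (staircase n).degree := by
  let e : Fin n → ℕ := fun k => n - 1 - k - if k = a then 1 else 0
  have he (k : Fin n) : e (swap a b k) = e k := by
    simp only [e, swap_apply_def]
    split_ifs <;> subst_vars <;> simp only [Fin.ext_iff, not_true_eq_false] at * <;> omega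
  have hxq : X a * ∏ k, X k ^ e k
      = ∏ k : Fin n, (X k : MvPolynomial (Fin n) ℚ) ^ (n - 1 - k) := by
    rw [← Finset.mul_prod_erase _ _ (Finset.mem_univ a),
      ← Finset.mul_prod_erase _ (fun k : Fin n => (X k : MvPolynomial (Fin n) ℚ) ^ (n - 1 - k))
        (Finset.mem_univ a), ← mul_assoc, ← pow_succ']
    have := b.isLt
    congr 1
    · congr 1
      simp only [e, ↓reduceIte]
      omega
    · exact Finset.prod_congr rfl fun k hk => by simp [e, Finset.ne_of_mem_erase hk]
  refine ⟨∏ k, X k ^ e k, ?_, ?_⟩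
  · have hXf : ∏ k : Fin n, Xf n k ^ (n - 1 - k)
        = algebraMap _ _ (X a * ∏ k, X k ^ e k : MvPolynomial (Fin n) ℚ) := by
      simp [hxq, Xf]
    rw [hXf]
    refine pitf_algebraMap_of_mul_eq (Fin.ne_of_val_ne (by omega)) ?_
    rw [map_mul, rename_X, swap_apply_left, rename_prod_X_pow _ _ he]
    ring
  · have hq0 : (∏ k, X k ^ e k : MvPolynomial (Fin n) ℚ) ≠ 0 :=
      Finset.prod_ne_zero_iff.2 fun k _ => pow_ne_zero _ (X_ne_zero k)
    have h := totalDegree_mul_of_isDomain (X_ne_zero a) hq0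
    rw [hxq, ← monomial_staircase, totalDegree_monomial _ one_ne_zero, totalDegree_X] at h
    change _ < (staircase n).sum fun _ e => e
    omega

section Grothendieck

def SatisfiesDemazureRecursion (G : Perm (Fin n) → Kf n) : Prop :=
  ∀ (w : Perm (Fin n)) (a b : Fin n), (a : ℕ) + 1 = b → w a < w b →
    G w = pitf n a b (G (w * swap a b))

variable {G : Perm (Fin n) → Kf n}

theorem SatisfiesDemazureRecursion.pitfNum_signedSum (hG : SatisfiesDemazureRecursion G)
    {a b : Fin n} (hab : (a : ℕ) + 1 = b) :
    pitfNum n a b (∑ w, (-1 : Kf n) ^ lenf n w * G w) = 0 := by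
  have hne : a ≠ b := Fin.ne_of_val_ne (by omega)
  have hsum : pitfNum n a b (∑ w, (-1 : Kf n) ^ lenf n w * G w)
      = ∑ w, (-1 : Kf n) ^ lenf n w * pitfNum n a b (G w) := by
    simp only [pitfNum, map_sum, map_mul, map_pow, map_neg, map_one, Finset.mul_sum,
      ← Finset.sum_sub_distrib, mul_sub, mul_left_comm]
  have hpair (w : Perm (Fin n)) (h : w a < w b) :
      (-1 : Kf n) ^ lenf n w * pitfNum n a b (G w)
        + (-1) ^ lenf n (w * swap a b) * pitfNum n a b (G (w * swap a b)) = 0 := by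
    rw [lenf_mul_swap_of_lt hab h, hG w a b hab h, pitfNum_pitf hne]
    ring
  rw [hsum]
  refine Finset.sum_ninvolution (· * swap a b) (fun w => ?_)
    (fun w _ => by simpa [mul_swap_eq_iff] using hne) (fun _ => Finset.mem_univ _)
    (mul_swap_involutive a b)
  rcases (w.injective.ne hne).lt_or_gt with h | h
  · exact hpair w h
  · rw [add_comm]
    simpa [mul_swap_mul_self] using hpair (w * swap a b) (by simpa using h)

theorem SatisfiesDemazureRecursion.exists_algebraMap_eq (hG : SatisfiesDemazureRecursion G)
    (htop : G Fin.revPerm = ∏ k : Fin n, Xf n k ^ (n - 1 - k)) (w : Perm (Fin n)) :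
    ∃ g : MvPolynomial (Fin n) ℚ, algebraMap _ _ g = G w
      ∧ g.totalDegree ≤ (staircase n).degree
      ∧ (w ≠ Fin.revPerm → g.totalDegree < (staircase n).degree) := by
  by_cases hw : w = Fin.revPerm
  · subst hw
    refine ⟨monomial (staircase n) 1, ?_, (totalDegree_monomial _ one_ne_zero).le, absurd rfl⟩
    simp [htop, monomial_staircase, Xf]
  obtain ⟨a, b, hab, hlt⟩ := exists_adjacent_lt_of_ne_revPerm hw
  -- `hlen` and `hmax` make the termination measure decrease at the recursive call.
  have hlen := lenf_mul_swap_of_lt hab hlt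
  have hmax := lenf_le_lenf_revPerm (w * swap a b)
  obtain ⟨q, hq, hdeg⟩ : ∃ q : MvPolynomial (Fin n) ℚ,
      pitf n a b (G (w * swap a b)) = algebraMap _ _ q
        ∧ q.totalDegree < (staircase n).degree := by
    by_cases hw' : w * swap a b = Fin.revPerm
    · rw [hw', htop]
      exact exists_pitf_staircase hab
    · obtain ⟨g, hg, -, hglt⟩ := hG.exists_algebraMap_eq htop (w * swap a b)
      obtain ⟨q, hq, hqg⟩ :=
        exists_pitf_algebraMap_totalDegree_le (i := a) (j := b) (Fin.ne_of_val_ne (by omega)) g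
      exact ⟨q, hg ▸ hq, hqg.trans_lt (hglt hw')⟩
  exact ⟨q, by rw [hG w a b hab hlt, hq], hdeg.le, fun _ => hdeg⟩
termination_by lenf n Fin.revPerm - lenf n w

theorem SatisfiesDemazureRecursion.exists_signedSum_eq (hG : SatisfiesDemazureRecursion G)
    (htop : G Fin.revPerm = ∏ k : Fin n, Xf n k ^ (n - 1 - k)) :
    ∃ s : MvPolynomial (Fin n) ℚ, algebraMap _ _ s = ∑ w, (-1 : Kf n) ^ lenf n w * G w
      ∧ s.totalDegree ≤ (staircase n).degree
      ∧ coeff (staircase n) s = (-1) ^ (staircase n).degree := by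
  choose g hgG hgdeg hglt using hG.exists_algebraMap_eq htop
  have htop' : g Fin.revPerm = monomial (staircase n) 1 := IsFractionRing.injective _ (Kf n)
    (by rw [hgG, htop, monomial_staircase]; simp [Xf])
  refine ⟨∑ w, C ((-1 : ℚ) ^ lenf n w) * g w, by simp [hgG], ?_, ?_⟩
  · exact totalDegree_finsetSum_le fun w _ =>
      (totalDegree_mul _ _).trans (by rw [totalDegree_C, zero_add]; exact hgdeg w)
  · simp only [coeff_sum, coeff_C_mul]
    rw [Finset.sum_eq_single Fin.revPerm (fun w _ hw => by
      rw [coeff_eq_zero_of_totalDegree_lt (hglt w hw), mul_zero]) (by simp), htop',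
      coeff_monomial, if_pos rfl, mul_one, degree_staircase]

end Grothendieck

/-- The signed sum of the Grothendieck polynomials over `Sₙ` equals
`∏_{i=1}^{n-1} (1 - xᵢ)^{n-i}`.  Here the Grothendieck polynomials are any family
`𝔊_w` with `𝔊_{w₀} = x₁^{n-1}⋯x_{n-1}` and `𝔊_w = π̃ᵢ 𝔊_{w sᵢ}` when `ℓ(w sᵢ) > ℓ(w)`. -/
theorem signed_sum_grothendieck (n : ℕ) (G : Equiv.Perm (Fin n) → Kf n)
    (htop : G Fin.revPerm = ∏ i : Fin n, Xf n i ^ (n - 1 - i.val))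
    (hrec : ∀ (w : Equiv.Perm (Fin n)) (i : ℕ) (h : i + 1 < n),
      lenf n w < lenf n (w * Equiv.swap ⟨i, Nat.lt_of_succ_lt h⟩ ⟨i + 1, h⟩) →
      G w = pitf n ⟨i, Nat.lt_of_succ_lt h⟩ ⟨i + 1, h⟩
        (G (w * Equiv.swap ⟨i, Nat.lt_of_succ_lt h⟩ ⟨i + 1, h⟩))) :
    ∑ w : Equiv.Perm (Fin n), (-1 : Kf n) ^ lenf n w * G w
      = ∏ i : Fin n, (1 - Xf n i) ^ (n - 1 - i.val) := by
  have hG : SatisfiesDemazureRecursion G := by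
    rintro w ⟨i, hi⟩ ⟨j, hj⟩ rfl h
    exact hrec w i hj (by rw [lenf_mul_swap_of_lt rfl h]; omega)
  obtain ⟨s, hs, hdeg, hcoeff⟩ := hG.exists_signedSum_eq htop
  have hrel (a b : Fin n) (hab : (a : ℕ) + 1 = b) :
      (1 - X b) * s = (1 - X a) * rename (swap a b) s := by
    have := hG.pitfNum_signedSum hab
    rwa [← hs, pitfNum_algebraMap, IsFractionRing.to_map_eq_zero_iff, sub_eq_zero] at this
  rw [← hs, eq_of_dvd_of_totalDegree_le (prod_one_sub_X_pow_dvd hrel) hdeg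
    (by simp [coeff_staircase_prod_one_sub_X_pow])
    (hcoeff.trans coeff_staircase_prod_one_sub_X_pow.symm)]
  simp [Xf]
end
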